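/- arXiv:2009.02578 — 7 statements merged into one kernel-verified Lean document; each statement's English description precedes it below -/
import Mathlib

section
/- For integers 1 ≤ b < c, 1 ≤ k ≤ c−b, and 1 ≤ p ≤ c−k and 0 ≤ q ≤ min(b,p) with p−q ≤ c−b−k, the identity C(c−b−p+q, k)·C(c−p, b−q)·C(c−k, b) / (C(c−k−p, b−q)·C(c, b)) = C(c−k, b)·C(c−p, k)/C(c, b) = C(c−b, k)·C(c−k, p)/C(c, p) holds (all binomial coefficients interpreted as usual, with the stated constraints ensuring non-vanishing denominators). -/
/-!
Both sides of `C(n, a) * C(n - a, k) = C(n, k) * C(n - k, a)` count the ways of choosing disjoint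
subsets of sizes `a` and `k` of an `n`-set, so it holds for all `n a k : ℕ`, truncated subtraction
included. The first equality of the theorem is this identity for
`n = c - p` and `a = b - q`; the second one follows from applying it twice with `n = c`.
-/

namespace Nat

theorem choose_mul_choose_sub_comm (n a k : ℕ) :
    n.choose a * (n - a).choose k = n.choose k * (n - k).choose a := by
  have hak := choose_mul (n := n) (Nat.le_add_right a k)
  have hka := choose_mul (n := n) (Nat.le_add_left k a)
  rw [Nat.add_sub_cancel_left] at hak
  rw [Nat.add_sub_cancel] at hka
  rw [← hak, ← hka, choose_symm_add]

theorem choose_mul_choose_sub_mul_choose_sub_comm (n a b k : ℕ) :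
    n.choose a * (n - a).choose k * (n - k).choose b =
      n.choose b * (n - b).choose k * (n - k).choose a := by
  rw [choose_mul_choose_sub_comm n a k, choose_mul_choose_sub_comm n b k]
  ring

end Nat

theorem stmt0_general (b c k p q : ℕ)
    (hqb : q ≤ b) (hqp : q ≤ p)
    (hpq : b + k + p ≤ c + q) :
    (((c + q - b - p).choose k * (c - p).choose (b - q) * (c - k).choose b : ℕ) : ℚ) /
        (((c - k - p).choose (b - q) * c.choose b : ℕ) : ℚ)
      = (((c - k).choose b * (c - p).choose k : ℕ) : ℚ) / ((c.choose b : ℕ) : ℚ) ∧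
    (((c - k).choose b * (c - p).choose k : ℕ) : ℚ) / ((c.choose b : ℕ) : ℚ)
      = (((c - b).choose k * (c - k).choose p : ℕ) : ℚ) / ((c.choose p : ℕ) : ℚ) := by
  have hswap : (c + q - b - p).choose k * (c - p).choose (b - q) =
      (c - k - p).choose (b - q) * (c - p).choose k := by
    rw [show c + q - b - p = c - p - (b - q) by omega, show c - k - p = c - p - k by omega,
      Nat.mul_comm, Nat.choose_mul_choose_sub_comm, Nat.mul_comm]
  have hD : ((c - k - p).choose (b - q) : ℚ) ≠ 0 := by
    exact_mod_cast (Nat.choose_pos (by omega)).ne'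
  have hB : (c.choose b : ℚ) ≠ 0 := by exact_mod_cast (Nat.choose_pos (by omega)).ne'
  have hP : (c.choose p : ℚ) ≠ 0 := by exact_mod_cast (Nat.choose_pos (by omega)).ne'
  constructor
  · rw [hswap]
    push_cast
    rw [mul_comm ((c - k).choose b : ℚ), mul_assoc, mul_div_mul_left _ _ hD]
  · rw [div_eq_div_iff hB hP]
    exact_mod_cast by
      simpa only [mul_comm, mul_left_comm, mul_assoc] using
        Nat.choose_mul_choose_sub_mul_choose_sub_comm c p b k

theorem stmt0 (b c k p q : ℕ)
    (hb : 1 ≤ b) (hbc : b < c)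
    (hk : 1 ≤ k) (hkc : k ≤ c - b)
    (hp : 1 ≤ p) (hpc : p ≤ c - k)
    (hqb : q ≤ b) (hqp : q ≤ p)
    (hpq : b + k + p ≤ c + q) :
    (((c + q - b - p).choose k * (c - p).choose (b - q) * (c - k).choose b : ℕ) : ℚ) /
        (((c - k - p).choose (b - q) * c.choose b : ℕ) : ℚ)
      = (((c - k).choose b * (c - p).choose k : ℕ) : ℚ) / ((c.choose b : ℕ) : ℚ) ∧
    (((c - k).choose b * (c - p).choose k : ℕ) : ℚ) / ((c.choose b : ℕ) : ℚ)
      = (((c - b).choose k * (c - k).choose p : ℕ) : ℚ) / ((c.choose p : ℕ) : ℚ) :=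
  stmt0_general b c k p q hqb hqp hpq
end

section
/- Let C = {1,…,c} and B = {1,…,b} with 1 ≤ b < c, and let 1 ≤ k ≤ c−b−1 and 1 ≤ p ≤ c−k. For a p-element subset J ⊆ C, let q'(J) = |J ∩ B|. If J is chosen uniformly at random among all p-element subsets of C, then the expected number of k-element subsets K ⊆ C∖B with K ∩ J = ∅, namely E[C(c−b−p+q'(J), k)], equals C(c−b, k)·C(c−k, p)/C(c, p). -/
/-!
Double counting of the pairs `(J, K)` with `J` a `p`-subset of `C`, `K` a `k`-subset of `C ∖ B`
and `K ∩ J = ∅`. For fixed `J` there are `C(c - b - p + q'(J), k)` choices of `K`; for fixed `K`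
there are `C(c - k, p)` choices of `J`, and there are `C(c - b, k)` sets `K`.
-/

open Finset

variable {α : Type*} [DecidableEq α]

theorem Finset.powersetCard_sdiff_eq_filter_disjoint (T J : Finset α) (k : ℕ) :
    (T \ J).powersetCard k = {K ∈ T.powersetCard k | Disjoint K J} := by
  ext K
  simp only [mem_powersetCard, mem_filter, subset_sdiff]
  tauto

theorem Finset.sum_choose_card_sdiff_powersetCard {T C : Finset α} (hTC : T ⊆ C) (k p : ℕ) :
    ∑ J ∈ C.powersetCard p, (#(T \ J)).choose k = (#T).choose k * (#C - k).choose p := by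
  have hAbove : ∀ J, (#(T \ J)).choose k
      = #((T.powersetCard k).bipartiteAbove (fun J K => Disjoint K J) J) := fun J => by
    rw [bipartiteAbove, ← powersetCard_sdiff_eq_filter_disjoint, card_powersetCard]
  have hBelow : ∀ K ∈ T.powersetCard k,
      #((C.powersetCard p).bipartiteBelow (fun J K => Disjoint K J) K) = (#C - k).choose p := by
    intro K hK
    obtain ⟨hKT, rfl⟩ := mem_powersetCard.mp hK
    simp only [bipartiteBelow, disjoint_comm (a := K)]
    rw [← powersetCard_sdiff_eq_filter_disjoint, card_powersetCard,
      card_sdiff_of_subset (hKT.trans hTC)]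
  simp_rw [hAbove, sum_card_bipartiteAbove_eq_sum_card_bipartiteBelow]
  rw [sum_congr rfl hBelow, sum_const, card_powersetCard, smul_eq_mul]

theorem card_Icc_succ_sdiff {b c : ℕ} {J : Finset ℕ} (hJ : J ⊆ Icc 1 c) :
    #(Icc (b + 1) c \ J) = c - b + #(J ∩ Icc 1 b) - #J := by
  have hTJ : Icc (b + 1) c ∩ J = J \ Icc 1 b := by
    ext x
    by_cases hx : x ∈ J
    · have := mem_Icc.mp (hJ hx)
      simp only [mem_inter, mem_sdiff, mem_Icc, hx, and_true, true_and]
      omega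
    · simp [hx]
  have hT := card_sdiff_add_card_inter (Icc (b + 1) c) J
  have hJB := card_inter_add_card_sdiff J (Icc 1 b)
  have hJT : #(J \ Icc 1 b) ≤ #(Icc (b + 1) c) := hTJ ▸ card_le_card inter_subset_left
  rw [hTJ] at hT
  rw [Nat.card_Icc] at hT hJT
  omega

theorem stmt1_general (b c k p : ℕ) :
    (∑ J ∈ (Finset.Icc 1 c).powersetCard p,
        (((c - b + (J ∩ Finset.Icc 1 b).card - p).choose k : ℕ) : ℚ)) /
        ((c.choose p : ℕ) : ℚ)
      = (((c - b).choose k * (c - k).choose p : ℕ) : ℚ) / ((c.choose p : ℕ) : ℚ) := by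
  have hT : Icc (b + 1) c ⊆ Icc 1 c := Icc_subset_Icc_left (Nat.le_add_left 1 b)
  have hCount : ∑ J ∈ (Icc 1 c).powersetCard p, (c - b + #(J ∩ Icc 1 b) - p).choose k
      = (c - b).choose k * (c - k).choose p := by
    have hDouble := Finset.sum_choose_card_sdiff_powersetCard hT k p
    rw [Nat.card_Icc, Nat.card_Icc, Nat.add_sub_add_right, Nat.add_sub_cancel] at hDouble
    rw [← hDouble]
    refine sum_congr rfl fun J hJ => ?_
    obtain ⟨hJC, rfl⟩ := mem_powersetCard.mp hJ
    rw [card_Icc_succ_sdiff hJC]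
  rw [← Nat.cast_sum, hCount]

theorem stmt1 (b c k p : ℕ)
    (hb : 1 ≤ b) (hbc : b < c)
    (hk : 1 ≤ k) (hkc : k ≤ c - b - 1)
    (hp : 1 ≤ p) (hpc : p ≤ c - k) :
    (∑ J ∈ (Finset.Icc 1 c).powersetCard p,
        (((c - b + (J ∩ Finset.Icc 1 b).card - p).choose k : ℕ) : ℚ)) /
        ((c.choose p : ℕ) : ℚ)
      = (((c - b).choose k * (c - k).choose p : ℕ) : ℚ) / ((c.choose p : ℕ) : ℚ) :=
  stmt1_general b c k p
end

section
/- For a contributing cusum subscript (h₁,…,h_p) with ordered rearrangement h'₁ ≤ … ≤ h'_p satisfying h'_α ≥ α, the number of p-tuples (j₁,…,j_p) with pairwise distinct entries and 1 ≤ j_α ≤ h_α for all α equals h'₁·(h'₂−1)·…·(h'_p−p+1). -/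
/-!
Sorting `h` only permutes the positions, so we may assume `h` monotone. Then choose the entries
from the last one backwards: once `j₁, …, j_{p-1}` are fixed, they all lie in `Iic h_p`, so the
last entry has exactly `#(Iic h_p) - (p - 1)` admissible values, independently of the earlier
choices. Induction on `p` gives the product.
-/

open Finset Function Fin

section InjectiveTuplesBelow

variable {α : Type*} [Fintype α] [DecidableEq α] [Preorder α] [DecidableLE α] {p : ℕ}

def injectiveTuplesBelow (g : Fin p → α) : Finset (Fin p → α) :=
  {j | Injective j ∧ ∀ i, j i ≤ g i}

theorem mem_injectiveTuplesBelow {g j : Fin p → α} :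
    j ∈ injectiveTuplesBelow g ↔ Injective j ∧ ∀ i, j i ≤ g i := by
  simp [injectiveTuplesBelow]

theorem card_injectiveTuplesBelow_comp_equiv (g : Fin p → α) (σ : Fin p ≃ Fin p) :
    #(injectiveTuplesBelow (g ∘ σ)) = #(injectiveTuplesBelow g) := by
  refine (card_equiv (σ.arrowCongr (Equiv.refl α)).symm fun j => ?_).symm
  rw [mem_injectiveTuplesBelow, mem_injectiveTuplesBelow]
  change _ ↔ Injective (j ∘ σ) ∧ ∀ i, j (σ i) ≤ g (σ i)
  rw [σ.injective_comp, σ.forall_congr_right (q := fun i => j i ≤ g i)]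

theorem snoc_mem_injectiveTuplesBelow_iff {g : Fin (p + 1) → α} {j : Fin p → α} {x : α} :
    snoc j x ∈ injectiveTuplesBelow g ↔
      j ∈ injectiveTuplesBelow (init g) ∧ x ≤ g (last p) ∧ x ∉ Set.range j := by
  simp only [mem_injectiveTuplesBelow, snoc_injective_iff, forall_fin_succ', snoc_castSucc,
    snoc_last, init]
  tauto

theorem card_injectiveTuplesBelow_snoc [LocallyFiniteOrderBot α] (g : Fin (p + 1) → α)
    (hg : ∀ i, g (castSucc i) ≤ g (last p)) :
    #(injectiveTuplesBelow g) =
      #(injectiveTuplesBelow (init g)) * (#(Iic (g (last p))) - p) := by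
  have hfiber : ∀ j ∈ injectiveTuplesBelow (init g),
      #(Iic (g (last p)) \ univ.image j) = #(Iic (g (last p))) - p := by
    intro j hj
    obtain ⟨hinj, hle⟩ := mem_injectiveTuplesBelow.mp hj
    rw [card_sdiff_of_subset, card_image_of_injective _ hinj, card_univ, Fintype.card_fin]
    exact image_subset_iff.mpr fun i _ => mem_Iic.mpr ((hle i).trans (hg i))
  rw [← sum_const_nat hfiber, ← card_sigma]
  refine card_nbij' (fun j => ⟨init j, j (last p)⟩) (fun x => snoc x.1 x.2) ?_ ?_ ?_ ?_
  · intro j hj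
    rw [mem_coe, ← snoc_init_self j, snoc_mem_injectiveTuplesBelow_iff] at hj
    simpa [and_assoc] using hj
  · rintro ⟨j, x⟩ hjx
    simpa [snoc_mem_injectiveTuplesBelow_iff, and_assoc] using hjx
  · intro j _
    exact snoc_init_self j
  · rintro ⟨j, x⟩ _
    simp

theorem card_injectiveTuplesBelow_of_monotone [LocallyFiniteOrderBot α] :
    ∀ {p : ℕ} (g : Fin p → α), Monotone g →
      #(injectiveTuplesBelow g) = ∏ i : Fin p, (#(Iic (g i)) - i)
  | 0, g, _ => by
    simp [injectiveTuplesBelow, injective_of_subsingleton]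
  | p + 1, g, hg => by
    rw [card_injectiveTuplesBelow_snoc g fun i => hg (le_last _),
      card_injectiveTuplesBelow_of_monotone (init g) (hg.comp strictMono_castSucc.monotone),
      prod_univ_castSucc]
    simp [init]

end InjectiveTuplesBelow

theorem stmt4_general (p c : ℕ) (h : Fin p → Fin c) :
    (Finset.univ.filter
        (fun j : Fin p → Fin c => Function.Injective j ∧ ∀ α, j α ≤ h α)).card
      = ∏ α : Fin p, (((h (Tuple.sort h α)) : ℕ) + 1 - (α : ℕ)) := by
  change #(injectiveTuplesBelow h) = _
  rw [← card_injectiveTuplesBelow_comp_equiv h (Tuple.sort h),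
    card_injectiveTuplesBelow_of_monotone _ (Tuple.monotone_sort h)]
  simp

theorem stmt4 (p c : ℕ) (hp : 0 < p) (hpc : p ≤ c) (h : Fin p → Fin c)
    (hcontrib : ∀ α : Fin p, (α : ℕ) ≤ ((h (Tuple.sort h α)) : ℕ)) :
    (Finset.univ.filter
        (fun j : Fin p → Fin c => Function.Injective j ∧ ∀ α, j α ≤ h α)).card
      = ∏ α : Fin p, (((h (Tuple.sort h α)) : ℕ) + 1 - (α : ℕ)) :=
  stmt4_general p c h
end

section
/- Fix 1 ≤ b < c, 1 ≤ k ≤ c−b−1, 1 ≤ p ≤ c−k. When applied to the averaged hypergeometric case: if q_p has the hypergeometric distribution of the number of successes in p draws without replacement from a population of c items containing b successes, then E[C(c−b−p+q_p, k)] = C(c−b, k)·C(c−k, p)/C(c, p). -/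
/-! Choosing the `p - q` drawn failures and then `k` of the undrawn ones is the same as first
choosing the `k` failures and then drawing `p - q` failures from the other `c - b - k`:
`C(c-b, p-q) C(c-b-(p-q), k) = C(c-b, k) C(c-b-k, p-q)`. Summing against `C(b, q)` is then
Vandermonde's identity, which gives `C(c-b, k) C(c-k, p)`. -/

open Finset

theorem Nat.choose_mul_choose_sub_comm_s8 (m j k : ℕ) :
    m.choose j * (m - j).choose k = m.choose k * (m - k).choose j := by
  by_cases h : j + k ≤ m
  · have hj := Nat.choose_mul (n := m) (Nat.le_add_right j k)
    have hk := Nat.choose_mul (n := m) (Nat.le_add_left k j)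
    rw [Nat.add_sub_cancel_left] at hj
    rw [Nat.add_sub_cancel] at hk
    rw [← hj, ← hk, Nat.choose_symm_add]
  · have hl : m.choose j * (m - j).choose k = 0 := by
      rcases le_or_gt j m with hjm | hjm
      · rw [Nat.choose_eq_zero_of_lt (by omega : m - j < k), mul_zero]
      · rw [Nat.choose_eq_zero_of_lt hjm, zero_mul]
    have hr : m.choose k * (m - k).choose j = 0 := by
      rcases le_or_gt k m with hkm | hkm
      · rw [Nat.choose_eq_zero_of_lt (by omega : m - k < j), mul_zero]
      · rw [Nat.choose_eq_zero_of_lt hkm, zero_mul]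
    rw [hl, hr]

theorem Nat.sum_range_choose_mul_choose_mul_choose (b m k p : ℕ) :
    ∑ q ∈ range (p + 1), b.choose q * m.choose (p - q) * (m + q - p).choose k
      = m.choose k * (b + (m - k)).choose p := by
  calc ∑ q ∈ range (p + 1), b.choose q * m.choose (p - q) * (m + q - p).choose k
      = ∑ q ∈ range (p + 1), m.choose k * (b.choose q * (m - k).choose (p - q)) := by
        refine sum_congr rfl fun q hq => ?_
        have hqp : q ≤ p := Nat.lt_succ_iff.mp (mem_range.mp hq)
        rw [show m + q - p = m - (p - q) by omega, mul_assoc, Nat.choose_mul_choose_sub_comm_s8]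
        ring
    _ = m.choose k * (b + (m - k)).choose p := by
        rw [← mul_sum, Nat.add_choose_eq, Nat.sum_antidiagonal_eq_sum_range_succ_mk]

theorem stmt8_general (b c k p : ℕ)
    (hbc : b < c) (hkc : k ≤ c - b - 1) :
    ∑ q ∈ Finset.range (p + 1),
        (((b.choose q * (c - b).choose (p - q) : ℕ) : ℚ) / ((c.choose p : ℕ) : ℚ)) *
          (((c - b + q - p).choose k : ℕ) : ℚ)
      = (((c - b).choose k * (c - k).choose p : ℕ) : ℚ) / ((c.choose p : ℕ) : ℚ) := by
  have key := Nat.sum_range_choose_mul_choose_mul_choose b (c - b) k p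
  rw [show b + (c - b - k) = c - k by omega] at key
  simp_rw [div_mul_eq_mul_div, ← sum_div, ← key]
  push_cast
  rfl

theorem stmt8 (b c k p : ℕ)
    (hb : 1 ≤ b) (hbc : b < c) (hk : 1 ≤ k) (hkc : k ≤ c - b - 1)
    (hp : 1 ≤ p) (hpc : p ≤ c - k) :
    ∑ q ∈ Finset.range (p + 1),
        (((b.choose q * (c - b).choose (p - q) : ℕ) : ℚ) / ((c.choose p : ℕ) : ℚ)) *
          (((c - b + q - p).choose k : ℕ) : ℚ)
      = (((c - b).choose k * (c - k).choose p : ℕ) : ℚ) / ((c.choose p : ℕ) : ℚ) :=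
  stmt8_general b c k p hbc hkc
end

section
/- Let w = (ω,…,ω,1,…,1) with the first g components equal to ω ≥ 1 (a simplex boundary vector), with g = b ≥ 2, and consider the double-index average cross-product ratio R^{(q,g)}_{J•}(ω) with q=1, p=2, J = {1, j₂}. Then the limit as ω → ∞ equals (1−k/c)(1−k/(c−1)) when 2 ≤ j₂ ≤ g, and equals (1−k/c)(1−k/(c−1))/(1−k/(c−g)) when g+1 ≤ j₂ ≤ c−1. -/
/-- `esym S w m` is the `m`-th elementary symmetric polynomial of the weights
`w i`, `i ∈ S`. -/
noncomputable def esym (S : Finset ℕ) (w : ℕ → ℝ) (m : ℕ) : ℝ :=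
  ∑ T ∈ S.powersetCard m, ∏ i ∈ T, w i

/-- The simplex boundary vector `W^{(g)}(ω)`: first `g` coordinates equal to `ω`,
the rest equal to `1` (indices `1,…,c`). -/
noncomputable def simplexW (g : ℕ) (ω : ℝ) : ℕ → ℝ := fun i => if i ≤ g then ω else 1

/-- The cross-product ratio `R_{JK}` for `p = 2`, `q = 1`, `J = {1, j₂}`. -/
noncomputable def crossRatio (b c k j₂ : ℕ) (K : Finset ℕ) (w : ℕ → ℝ) : ℝ :=
  (esym (Finset.Icc 1 c \ insert 1 (insert j₂ K)) w (b - 1) /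
      ((c - k - 2).choose (b - 1) : ℝ)) *
    (esym (Finset.Icc 1 c) w b / (c.choose b : ℝ)) /
  ((esym (Finset.Icc 1 c \ {1, j₂}) w (b - 1) / ((c - 2).choose (b - 1) : ℝ)) *
    (esym (Finset.Icc 1 c \ K) w b / ((c - k).choose b : ℝ)))

/-- The average cross-product ratio `R_{J•}`, averaged over `k`-subsets
`K ⊆ C∖B` disjoint from `J = {1, j₂}`. -/
noncomputable def avgCrossRatio (b c k j₂ : ℕ) (w : ℕ → ℝ) : ℝ :=
  (∑ K ∈ ((Finset.Icc (b + 1) c).erase j₂).powersetCard k, crossRatio b c k j₂ K w) /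
    ((((Finset.Icc (b + 1) c).erase j₂).powersetCard k).card : ℝ)

/-!
For `w = W^{(b)}(ω)` and `a = #(S ∩ {1,…,b}) ≤ m`, the elementary symmetric polynomial
`e_m(w on S)` is a polynomial in `ω` of degree `a` whose leading coefficient
`C(#S - a, m - a)` counts the `m`-subsets of `S` containing `S ∩ {1,…,b}`. With
`e = #(J ∩ {1,…,b})`, numerator and denominator of each `R_{JK}` both grow like `ω^(2b-e)`,
so `R_{JK}` tends to a ratio of leading coefficients that does not depend on `K`, and so does
the average. The identity `n (n-1) C(n-2, b-1) = b (n-b) C(n, b)` at `n = c` and `n = c - k`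
turns that ratio into the closed form.
-/

open Finset Filter Topology

lemma prod_simplexW (g : ℕ) (ω : ℝ) (T : Finset ℕ) :
    ∏ i ∈ T, simplexW g ω i = ω ^ #{i ∈ T | i ≤ g} := by
  simp [simplexW, prod_ite]

lemma tendsto_pow_div_pow_atTop {j d : ℕ} (h : j ≤ d) :
    Tendsto (fun ω : ℝ => ω ^ j / ω ^ d) atTop (𝓝 (if j = d then 1 else 0)) := by
  split_ifs with hjd
  · subst hjd
    refine tendsto_const_nhds.congr' ?_
    filter_upwards [eventually_gt_atTop 0] with ω hω
    exact (div_self (by positivity)).symm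
  · refine (tendsto_pow_atTop (α := ℝ) (n := d - j) (by omega)).inv_tendsto_atTop.congr' ?_
    filter_upwards [eventually_gt_atTop 0] with ω hω
    rw [Pi.inv_apply, pow_sub₀ ω hω.ne' h, mul_inv, inv_inv, div_eq_mul_inv, mul_comm]

lemma filter_subset_iff_card_filter_eq {α : Type*} {p : α → Prop} [DecidablePred p]
    {S T : Finset α} (hT : T ⊆ S) : S.filter p ⊆ T ↔ #(T.filter p) = #(S.filter p) := by
  refine ⟨fun h => ?_, fun h => ?_⟩
  · refine congrArg card (Subset.antisymm (filter_subset_filter p hT) fun i hi => ?_)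
    exact mem_filter.2 ⟨h hi, (mem_filter.1 hi).2⟩
  · rw [← eq_of_subset_of_card_le (filter_subset_filter p hT) h.ge]
    exact filter_subset p T

lemma tendsto_esym_simplexW_div_pow (g m : ℕ) (S : Finset ℕ) (hm : #{i ∈ S | i ≤ g} ≤ m) :
    Tendsto (fun ω => esym S (simplexW g ω) m / ω ^ #{i ∈ S | i ≤ g}) atTop
      (𝓝 ((#S - #{i ∈ S | i ≤ g}).choose (m - #{i ∈ S | i ≤ g}) : ℝ)) := by
  have hterm : ∀ T ∈ S.powersetCard m, Tendsto
      (fun ω : ℝ => ω ^ #{i ∈ T | i ≤ g} / ω ^ #{i ∈ S | i ≤ g}) atTop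
      (𝓝 (if {i ∈ S | i ≤ g} ⊆ T then 1 else 0)) := by
    intro T hT
    have hTS := (mem_powersetCard.1 hT).1
    simpa only [filter_subset_iff_card_filter_eq hTS] using
      tendsto_pow_div_pow_atTop (card_le_card (filter_subset_filter _ hTS))
  have hsum := tendsto_finsetSum _ hterm
  rw [sum_boole, card_filter_powersetCard_subset _ _ _ (filter_subset _ _) hm] at hsum
  simpa only [esym, sum_div, prod_simplexW] using hsum

lemma card_filter_le_Icc_sdiff {b c : ℕ} (hbc : b ≤ c) {T : Finset ℕ} (hT : T ⊆ Icc 1 c) :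
    #{i ∈ Icc 1 c \ T | i ≤ b} = b - #{i ∈ T | i ≤ b} := by
  have hfilter : {i ∈ Icc 1 c \ T | i ≤ b} = {i ∈ Icc 1 c | i ≤ b} \ {i ∈ T | i ≤ b} := by
    ext i; simp only [mem_filter, Finset.mem_sdiff]; tauto
  have hIcc : {i ∈ Icc 1 c | i ≤ b} = Icc 1 b := by
    ext i; simp only [mem_filter, mem_Icc]; omega
  rw [hfilter, card_sdiff_of_subset (filter_subset_filter _ hT), hIcc, Nat.card_Icc,
    Nat.add_sub_cancel]

lemma card_Icc_sdiff {c : ℕ} {T : Finset ℕ} (hT : T ⊆ Icc 1 c) : #(Icc 1 c \ T) = c - #T := by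
  rw [card_sdiff_of_subset hT, Nat.card_Icc, Nat.add_sub_cancel]

lemma tendsto_esym_Icc_sdiff_div_pow (b c m a : ℕ) {T : Finset ℕ} (hbc : b ≤ c)
    (hT : T ⊆ Icc 1 c) (ha : b - #{i ∈ T | i ≤ b} = a) (ham : a ≤ m) :
    Tendsto (fun ω => esym (Icc 1 c \ T) (simplexW b ω) m / ω ^ a) atTop
      (𝓝 ((c - #T - a).choose (m - a) : ℝ)) := by
  have hA : #{i ∈ Icc 1 c \ T | i ≤ b} = a := by rw [card_filter_le_Icc_sdiff hbc hT, ha]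
  have h := tendsto_esym_simplexW_div_pow b m (Icc 1 c \ T) (hA ▸ ham)
  rwa [hA, card_Icc_sdiff hT] at h

lemma Filter.Tendsto.mul_div_mul_of_rescaled {α : Type*} {l : Filter α}
    {f₁ f₂ f₃ f₄ g₁ g₂ : α → ℝ} {L₁ L₂ L₃ L₄ C₁ C₂ C₃ C₄ : ℝ}
    (h₁ : Tendsto (fun x => f₁ x / g₁ x) l (𝓝 L₁))
    (h₂ : Tendsto (fun x => f₂ x / g₂ x) l (𝓝 L₂))
    (h₃ : Tendsto (fun x => f₃ x / g₁ x) l (𝓝 L₃))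
    (h₄ : Tendsto (fun x => f₄ x / g₂ x) l (𝓝 L₄))
    (hg : ∀ᶠ x in l, g₁ x * g₂ x ≠ 0) (hL : L₃ / C₃ * (L₄ / C₄) ≠ 0) :
    Tendsto (fun x => f₁ x / C₁ * (f₂ x / C₂) / (f₃ x / C₃ * (f₄ x / C₄))) l
      (𝓝 (L₁ / C₁ * (L₂ / C₂) / (L₃ / C₃ * (L₄ / C₄)))) := by
  refine (((h₁.div_const C₁).mul (h₂.div_const C₂)).div
    ((h₃.div_const C₃).mul (h₄.div_const C₄)) hL).congr' ?_
  filter_upwards [hg] with x hx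
  simp only [Pi.div_apply]
  rw [← div_div_div_cancel_right₀ hx (f₁ x / C₁ * (f₂ x / C₂))]
  congr 1 <;> ring

lemma mul_sub_one_mul_choose_sub_two {n b : ℕ} (hb : 1 ≤ b) (hn : 2 ≤ n) :
    n * (n - 1) * (n - 2).choose (b - 1) = n.choose b * b * (n - b) := by
  obtain ⟨j, rfl⟩ : ∃ j, b = j + 1 := ⟨b - 1, by omega⟩
  obtain ⟨m, rfl⟩ : ∃ m, n = m + 2 := ⟨n - 2, by omega⟩
  simp only [Nat.add_sub_cancel, show m + 2 - 1 = m + 1 by omega,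
    show m + 2 - (j + 1) = m + 1 - j by omega]
  rw [mul_assoc, mul_comm (m + 1), Nat.choose_mul_succ_eq, ← mul_assoc,
    Nat.add_one_mul_choose_eq]

lemma choose_cross_ratio_eq {b c k : ℕ} (hb : 1 ≤ b) (hbkc : b + k + 2 ≤ c) :
    ((c - 2).choose (b - 1) * (c - k).choose b : ℝ) / ((c - k - 2).choose (b - 1) * c.choose b) =
      (1 - (k : ℝ) / c) * (1 - (k : ℝ) / ((c : ℝ) - 1)) / (1 - (k : ℝ) / ((c : ℝ) - b)) := by
  have hc := mul_sub_one_mul_choose_sub_two (n := c) hb (by omega)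
  have hck := mul_sub_one_mul_choose_sub_two (n := c - k) hb (by omega)
  replace hc := congrArg (Nat.cast (R := ℝ)) hc
  replace hck := congrArg (Nat.cast (R := ℝ)) hck
  push_cast [Nat.cast_sub (show 1 ≤ c by omega), Nat.cast_sub (show b ≤ c by omega),
    Nat.cast_sub (show k ≤ c by omega), Nat.cast_sub (show 1 ≤ c - k by omega),
    Nat.cast_sub (show b ≤ c - k by omega)] at hc hck
  have h₁ : (0 : ℝ) < (c - k - 2).choose (b - 1) := by exact_mod_cast Nat.choose_pos (by omega)
  have h₂ : (0 : ℝ) < c.choose b := by exact_mod_cast Nat.choose_pos (by omega)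
  have hbkc' : (b : ℝ) + k + 2 ≤ c := by exact_mod_cast hbkc
  have h₃ : (c : ℝ) - b - k ≠ 0 := by linarith
  have h₄ : (c : ℝ) - 1 ≠ 0 := by linarith
  have h₅ : (c : ℝ) - b ≠ 0 := by linarith
  have h₆ : (c : ℝ) ≠ 0 := by linarith
  field_simp
  linear_combination ((c - k).choose b * ((c : ℝ) - b - k)) * hc -
    (c.choose b * ((c : ℝ) - b)) * hck

lemma card_filter_pair_le {b j₂ : ℕ} (hb : 1 ≤ b) (hj₂ : 2 ≤ j₂) :
    #{i ∈ ({1, j₂} : Finset ℕ) | i ≤ b} = if j₂ ≤ b then 2 else 1 := by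
  split_ifs with h
  · rw [filter_true_of_mem fun i hi => by simp only [mem_insert, mem_singleton] at hi; omega]
    exact card_pair (by omega)
  · rw [filter_insert, filter_singleton, if_pos hb, if_neg h]
    rfl

lemma tendsto_finset_average_of_forall {ι α : Type*} {l : Filter α} {s : Finset ι}
    (hs : s.Nonempty) {f : ι → α → ℝ} {a : ℝ} (h : ∀ i ∈ s, Tendsto (f i) l (𝓝 a)) :
    Tendsto (fun x => (∑ i ∈ s, f i x) / #s) l (𝓝 a) := by
  have hsum := (tendsto_finsetSum s h).div_const #s
  rwa [sum_const, nsmul_eq_mul, mul_div_cancel_left₀ _ (by exact_mod_cast hs.card_pos.ne')]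
    at hsum

lemma filter_le_insert_one_insert {b c j₂ : ℕ} {K : Finset ℕ} (hK : K ⊆ Icc (b + 1) c) :
    {i ∈ insert 1 (insert j₂ K) | i ≤ b} = {i ∈ ({1, j₂} : Finset ℕ) | i ≤ b} := by
  ext i
  simp only [mem_filter, mem_insert, mem_singleton]
  have := fun h : i ∈ K => mem_Icc.1 (hK h)
  grind

lemma card_insert_one_insert {b c j₂ : ℕ} {K : Finset ℕ} (hb : 1 ≤ b) (hj₂ : 2 ≤ j₂)
    (hK : K ⊆ (Icc (b + 1) c).erase j₂) : #(insert 1 (insert j₂ K)) = #K + 2 := by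
  have h1 : 1 ∉ insert j₂ K := by
    rw [mem_insert, not_or]
    exact ⟨by omega, fun h => by have := mem_Icc.1 (mem_of_mem_erase (hK h)); omega⟩
  rw [card_insert_of_notMem h1, card_insert_of_notMem fun h => by simpa using hK h]

lemma tendsto_crossRatio_simplexW {b c k j₂ e : ℕ} (hb : 1 ≤ b) (hbkc : b + k + 2 ≤ c)
    (hj₂ : 2 ≤ j₂) (hj₂c : j₂ ≤ c) (he : e = if j₂ ≤ b then 2 else 1) {K : Finset ℕ}
    (hK : K ⊆ (Icc (b + 1) c).erase j₂) (hKc : #K = k) :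
    Tendsto (fun ω => crossRatio b c k j₂ K (simplexW b ω)) atTop
      (𝓝 (((c - k - 2 - (b - e)).choose (e - 1) / (c - 2 - (b - e)).choose (e - 1) : ℝ) *
        (((c - 2).choose (b - 1) * (c - k).choose b : ℝ) /
          ((c - k - 2).choose (b - 1) * c.choose b)))) := by
  have hKIcc : K ⊆ Icc (b + 1) c := hK.trans (erase_subset _ _)
  have hJ : ({1, j₂} : Finset ℕ) ⊆ Icc 1 c := by
    intro i hi; simp only [mem_insert, mem_singleton] at hi; rw [mem_Icc]; omega
  have hK' : K ⊆ Icc 1 c := hKIcc.trans (Icc_subset_Icc (by omega) le_rfl)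
  have hT : insert 1 (insert j₂ K) ⊆ Icc 1 c := insert_subset (hJ (mem_insert_self _ _))
    (insert_subset (hJ (by simp)) hK')
  have hJe : #{i ∈ ({1, j₂} : Finset ℕ) | i ≤ b} = e :=
    (card_filter_pair_le hb hj₂).trans he.symm
  have he₁ : 1 ≤ e ∧ e ≤ b := by split_ifs at he <;> omega
  have hKle : {i ∈ K | i ≤ b} = ∅ := filter_false_of_mem fun i hi => by
    have := mem_Icc.1 (hKIcc hi); omega
  have h₁ := tendsto_esym_Icc_sdiff_div_pow b c (b - 1) (b - e) (by omega) hT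
    (by rw [filter_le_insert_one_insert hKIcc, hJe]) (by omega)
  rw [card_insert_one_insert hb hj₂ hK, hKc, show c - (k + 2) = c - k - 2 by omega,
    show b - 1 - (b - e) = e - 1 by omega] at h₁
  have h₂ := tendsto_esym_Icc_sdiff_div_pow b c b b (by omega) (empty_subset _) (by simp) le_rfl
  rw [sdiff_empty, Nat.sub_self, Nat.choose_zero_right] at h₂
  have h₃ := tendsto_esym_Icc_sdiff_div_pow b c (b - 1) (b - e) (by omega) hJ (by rw [hJe])
    (by omega)
  rw [card_pair (by omega), show b - 1 - (b - e) = e - 1 by omega] at h₃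
  have h₄ := tendsto_esym_Icc_sdiff_div_pow b c b b (by omega) hK'
    (by rw [hKle, card_empty, Nat.sub_zero]) le_rfl
  rw [Nat.sub_self, Nat.choose_zero_right] at h₄
  have hpos : ∀ {n r : ℕ}, r ≤ n → (0 : ℝ) < n.choose r := fun h => by
    exact_mod_cast Nat.choose_pos h
  unfold crossRatio
  convert h₁.mul_div_mul_of_rescaled h₂ h₃ h₄
    (C₁ := ((c - k - 2).choose (b - 1) : ℝ)) (C₂ := (c.choose b : ℝ))
    (C₃ := ((c - 2).choose (b - 1) : ℝ)) (C₄ := ((c - k).choose b : ℝ))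
    (eventually_gt_atTop 0 |>.mono fun ω hω => by positivity)
    (by have := hpos (n := c - 2 - (b - e)) (r := e - 1) (by omega)
        have := hpos (n := c - 2) (r := b - 1) (by omega)
        have := hpos (n := c - k) (r := b) (by omega)
        positivity) using 2
  simp only [Nat.cast_one, div_eq_mul_inv, mul_inv, inv_inv]
  ring

lemma choose_pair_mul_choose_cross_ratio_eq {b c k j₂ e : ℕ} (hb : 1 ≤ b)
    (hbkc : b + k + 2 ≤ c) (hj₂ : 2 ≤ j₂) (he : e = if j₂ ≤ b then 2 else 1) :
    ((c - k - 2 - (b - e)).choose (e - 1) / (c - 2 - (b - e)).choose (e - 1) : ℝ) *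
        (((c - 2).choose (b - 1) * (c - k).choose b : ℝ) /
          ((c - k - 2).choose (b - 1) * c.choose b)) =
      if j₂ ≤ b then (1 - (k : ℝ) / c) * (1 - (k : ℝ) / ((c : ℝ) - 1))
      else (1 - (k : ℝ) / c) * (1 - (k : ℝ) / ((c : ℝ) - 1)) / (1 - (k : ℝ) / ((c : ℝ) - b)) := by
  rw [choose_cross_ratio_eq hb hbkc]
  split_ifs at he ⊢ with h
  · subst he
    have hck : (b : ℝ) + k + 2 ≤ c := by exact_mod_cast hbkc
    have hn : ((c - k - 2 - (b - 2) : ℕ) : ℝ) = c - b - k := by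
      rw [eq_sub_iff_add_eq, eq_sub_iff_add_eq]
      exact_mod_cast (by omega : c - k - 2 - (b - 2) + k + b = c)
    have hd : ((c - 2 - (b - 2) : ℕ) : ℝ) = c - b := by
      rw [eq_sub_iff_add_eq]
      exact_mod_cast (by omega : c - 2 - (b - 2) + b = c)
    have hcb : (c : ℝ) - b ≠ 0 := by linarith
    have hcbk : (c : ℝ) - b - k ≠ 0 := by linarith
    rw [Nat.choose_one_right, Nat.choose_one_right, hn, hd, one_sub_div hcb]
    field_simp
  · simp [he]

theorem stmt11_general (b c k j₂ : ℕ) (hb : 2 ≤ b) (hbkc : b + k + 2 ≤ c)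
    (hj₂ : 2 ≤ j₂) (hj₂c : j₂ ≤ c - 1) :
    Filter.Tendsto (fun ω : ℝ => avgCrossRatio b c k j₂ (simplexW b ω))
      Filter.atTop
      (nhds (if j₂ ≤ b then
        (1 - (k : ℝ) / (c : ℝ)) * (1 - (k : ℝ) / ((c : ℝ) - 1))
      else
        (1 - (k : ℝ) / (c : ℝ)) * (1 - (k : ℝ) / ((c : ℝ) - 1)) /
          (1 - (k : ℝ) / ((c : ℝ) - (b : ℝ))))) := by
  have hb₁ : 1 ≤ b := by omega
  refine tendsto_finset_average_of_forall (powersetCard_nonempty.2 ?_) fun K hK => ?_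
  · have := pred_card_le_card_erase (s := Icc (b + 1) c) (a := j₂)
    rw [Nat.card_Icc] at this
    omega
  obtain ⟨hKsub, hKc⟩ := mem_powersetCard.1 hK
  rw [← choose_pair_mul_choose_cross_ratio_eq hb₁ hbkc hj₂ rfl]
  exact tendsto_crossRatio_simplexW hb₁ hbkc hj₂ (by omega) rfl hKsub hKc

theorem stmt11 (b c k j₂ : ℕ) (hb : 2 ≤ b) (hk : 1 ≤ k) (hbkc : b + k + 2 ≤ c)
    (hj₂ : 2 ≤ j₂) (hj₂c : j₂ ≤ c - 1) :
    Filter.Tendsto (fun ω : ℝ => avgCrossRatio b c k j₂ (simplexW b ω))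
      Filter.atTop
      (nhds (if j₂ ≤ b then
        (1 - (k : ℝ) / (c : ℝ)) * (1 - (k : ℝ) / ((c : ℝ) - 1))
      else
        (1 - (k : ℝ) / (c : ℝ)) * (1 - (k : ℝ) / ((c : ℝ) - 1)) /
          (1 - (k : ℝ) / ((c : ℝ) - (b : ℝ))))) :=
  stmt11_general b c k j₂ hb hbkc hj₂ hj₂c
end

section
/- For integers 1 ≤ b < c, 1 ≤ k ≤ c−b−1, and 2 ≤ h₂ ≤ c−1 with b ≥ 2, the initial value A(1) = ((b−1)/(h₂−1))·C(c−b, k) + ((h₂−b)/(h₂−1))·C(c−b−1, k) (interpreting the second term as present only when h₂ > b) satisfies A(1) > C(c−b, k)·C(c−k, 2)/C(c, 2). -/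
/-!
Write `X = C(c-b, k)`. Both sides are `X` times one minus a loss: on the left the loss is
`1 - C(c-k, 2) / C(c, 2) = k (2c-k-1) / (c (c-1))`, on the right, by `C(c-b-1, k) = X (c-b-k)/(c-b)`,
it is `(h₂-b)/(h₂-1) · k/(c-b)` (and nothing when `h₂ ≤ b`, where the right side is already `≥ X`).
The factor `(h₂-b)/(h₂-1)` grows with `h₂`, so it suffices to compare the losses at `h₂ = c-1`
and `k`'s worst case `2c-k-1 ≥ c+b`, which is a cubic inequality in `b` and `c`.
-/

namespace Nat

variable {𝕜 : Type*} [Field 𝕜] [CharZero 𝕜]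

theorem cast_choose_two_sub_div_cast_choose_two {n k : ℕ} (hk : k ≤ n) (hn : 2 ≤ n) :
    ((n - k).choose 2 : 𝕜) / n.choose 2 = 1 - k * (2 * n - k - 1) / (n * (n - 1)) := by
  have hn0 : (n : 𝕜) ≠ 0 := by norm_cast; omega
  have hn1 : (n : 𝕜) - 1 ≠ 0 := by
    rw [sub_ne_zero]; norm_cast; omega
  rw [cast_choose_two, cast_choose_two, Nat.cast_sub hk]
  field_simp
  ring

theorem cast_choose_pred_mul (n k : ℕ) :
    ((n - 1).choose k : 𝕜) * n = n.choose k * (n - k) := by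
  cases n with
  | zero => cases k <;> simp
  | succ m =>
    rw [Nat.add_sub_cancel]
    rcases le_or_gt k (m + 1) with hk | hk
    · have h := congrArg (Nat.cast (R := 𝕜)) (Nat.choose_mul_succ_eq m k)
      push_cast [Nat.cast_sub hk] at h ⊢
      exact h
    · simp [Nat.choose_eq_zero_of_lt hk, Nat.choose_eq_zero_of_lt (Nat.lt_of_succ_lt hk)]

end Nat

section Inequalities

variable {𝕜 : Type*} [Field 𝕜] [LinearOrder 𝕜] [IsStrictOrderedRing 𝕜] {B C H K : 𝕜}

theorem sub_div_sub_one_le_sub_div_sub_one {H' : 𝕜} (hB : 1 ≤ B) (hH : 1 < H) (hHH' : H ≤ H') :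
    (H - B) / (H - 1) ≤ (H' - B) / (H' - 1) := by
  rw [div_le_div_iff₀ (by linarith) (by linarith)]
  nlinarith [mul_nonneg (sub_nonneg.2 hB) (sub_nonneg.2 hHH')]

theorem weighted_loss_lt_choose_two_loss (hB : 1 ≤ B) (hBH : B < H) (hHC : H + 1 ≤ C) (hK : 0 < K)
    (hKC : K + B + 1 ≤ C) :
    (H - B) / (H - 1) * (K / (C - B)) < K * (2 * C - K - 1) / (C * (C - 1)) := by
  have hCB : 0 < C - B := by linarith
  have hC : 0 < C * (C - 1) := by nlinarith
  have hCB2 : 0 < (C - B) * (C - 2) := by nlinarith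
  have hcubic : (C - 1 - B) * (C * (C - 1)) < (C + B) * ((C - B) * (C - 2)) := by
    -- with `t = C - B - 1 > 0` the difference is `t (B² + B - 1) + B t² + (2B + 1)(B - 1)`
    have ht : 0 < C - B - 1 := by linarith
    nlinarith [mul_pos ht (by nlinarith : 0 < B ^ 2 + B - 1),
      mul_pos (by linarith : 0 < B) (pow_pos ht 2),
      mul_nonneg (by linarith : (0 : 𝕜) ≤ 2 * B + 1) (sub_nonneg.2 hB)]
  calc (H - B) / (H - 1) * (K / (C - B))
      ≤ (C - 1 - B) / (C - 1 - 1) * (K / (C - B)) := by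
        gcongr ?_ * _
        exact sub_div_sub_one_le_sub_div_sub_one hB (by linarith) (by linarith)
    _ = K * ((C - 1 - B) / ((C - B) * (C - 2))) := by
        rw [sub_sub C 1 1, one_add_one_eq_two]
        field_simp
    _ < K * ((C + B) / (C * (C - 1))) := by
        gcongr K * ?_
        rwa [div_lt_div_iff₀ hCB2 hC]
    _ ≤ K * (2 * C - K - 1) / (C * (C - 1)) := by
        rw [mul_div_assoc]
        gcongr
        linarith

end Inequalities

theorem cast_weighted_choose_eq {𝕜 : Type*} [Field 𝕜] [CharZero 𝕜] {b c h : ℕ} (k : ℕ)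
    (hb : 1 ≤ b) (hbh : b < h) (hbc : b < c) :
    ((b - 1 : ℕ) : 𝕜) / (h - 1 : ℕ) * (c - b).choose k +
        ((h - b : ℕ) : 𝕜) / (h - 1 : ℕ) * (c - b - 1).choose k =
      (c - b).choose k * (1 - (h - b) / (h - 1) * (k / (c - b))) := by
  have hY := Nat.cast_choose_pred_mul (𝕜 := 𝕜) (c - b) k
  have hcb : (c : 𝕜) - b ≠ 0 := by rw [sub_ne_zero]; norm_cast; omega
  have hh1 : (h : 𝕜) - 1 ≠ 0 := by rw [sub_ne_zero]; norm_cast; omega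
  push_cast [Nat.cast_sub hb, Nat.cast_sub (hb.trans hbh.le), Nat.cast_sub hbh.le,
    Nat.cast_sub hbc.le] at hY ⊢
  field_simp
  linear_combination (h - b : 𝕜) * hY

theorem stmt12 (b c k h₂ : ℕ) (hb : 2 ≤ b) (hbc : b < c)
    (hk : 1 ≤ k) (hkc : k ≤ c - b - 1)
    (hh₂ : 2 ≤ h₂) (hh₂c : h₂ ≤ c - 1) :
    (((c - b).choose k * (c - k).choose 2 : ℕ) : ℚ) / ((c.choose 2 : ℕ) : ℚ) <
      (((b - 1) : ℕ) : ℚ) / (((h₂ - 1) : ℕ) : ℚ) * (((c - b).choose k : ℕ) : ℚ) +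
        (((h₂ - b) : ℕ) : ℚ) / (((h₂ - 1) : ℕ) : ℚ) * (((c - b - 1).choose k : ℕ) : ℚ) := by
  have hX : (0 : ℚ) < (c - b).choose k := Nat.cast_pos.2 (Nat.choose_pos (by omega))
  have hk' : (1 : ℚ) ≤ k := by exact_mod_cast hk
  have hkc' : (k : ℚ) + b + 1 ≤ c := by exact_mod_cast (by omega : k + b + 1 ≤ c)
  rw [Nat.cast_mul, mul_div_assoc,
    Nat.cast_choose_two_sub_div_cast_choose_two (by omega) (by omega)]
  rcases le_or_gt h₂ b with hhb | hbh
  · have hloss : 0 < (k : ℚ) * (2 * c - k - 1) / (c * (c - 1)) :=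
      div_pos (by nlinarith) (by nlinarith)
    have hfac : 1 ≤ (((b - 1) : ℕ) : ℚ) / (((h₂ - 1) : ℕ) : ℚ) :=
      (one_le_div (by exact_mod_cast (by omega : 0 < h₂ - 1))).2
        (by exact_mod_cast (by omega : h₂ - 1 ≤ b - 1))
    calc _ < (((c - b).choose k : ℕ) : ℚ) := mul_lt_of_lt_one_right hX (by linarith)
      _ ≤ (((b - 1) : ℕ) : ℚ) / (((h₂ - 1) : ℕ) : ℚ) * (c - b).choose k :=
        le_mul_of_one_le_left hX.le hfac
      _ ≤ _ := le_add_of_nonneg_right (by positivity)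
  · rw [cast_weighted_choose_eq k (by omega) hbh hbc]
    gcongr
    exact weighted_loss_lt_choose_two_loss (by exact_mod_cast (by omega : 1 ≤ b)) (by exact_mod_cast hbh)
      (by exact_mod_cast (by omega : h₂ + 1 ≤ c)) (by linarith) hkc'
end

section
/- For integers 1 ≤ b < c and 1 ≤ k ≤ c−b−1, and for b < h ≤ c−1, the quantity ((b−1)·C(c−b,k) + (h−b)·C(c−b−1,k))/(h−1) is strictly decreasing in h, and its value at h = c−1, namely ((b−1)·C(c−b,k) + (c−1−b)·C(c−b−1,k))/(c−2), is still strictly greater than C(c−b,k)·C(c−k,2)/C(c,2), provided b ≥ 2 and c ≥ b + k + 2. -/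
/-!
Write `A = C(c-b, k)` and `B = C(c-b-1, k)`. The identity `(c-b) B = (c-b-k) A` gives
`A - B = k A / (c-b) > 0`, and the quotient in `h` equals `B + (b-1)(A-B)/(h-1)`, which decreases.

For the second claim divide by `A`: the right-hand side becomes `1 - (c-1-b) k / ((c-b)(c-2))` and
the left-hand side `1 - k (2c-k-1) / (c(c-1))`. As `(c-1-b)/(c-b) < 1`, it suffices that
`c(c-1) ≤ (2c-k-1)(c-2)`, which holds once `c ≥ k + 4`.
-/

namespace Nat

lemma choose_sub_one_lt_choose {n k : ℕ} (hk : 0 < k) (hkn : k ≤ n) :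
    (n - 1).choose k < n.choose k := by
  obtain ⟨m, rfl⟩ : ∃ m, n = m + 1 := ⟨n - 1, by omega⟩
  obtain ⟨j, rfl⟩ : ∃ j, k = j + 1 := ⟨k - 1, by omega⟩
  rw [Nat.add_sub_cancel, choose_succ_succ']
  have := choose_pos (show j ≤ m by omega)
  omega

lemma cast_choose_sub_one_mul (R : Type*) [CommRing R] {n k : ℕ} (hkn : k ≤ n) :
    ((n - 1).choose k : R) * n = n.choose k * (n - k) := by
  rcases n with _ | m
  · obtain rfl : k = 0 := by omega
    simp
  · rw [Nat.add_sub_cancel, ← Nat.cast_sub hkn, ← Nat.cast_mul, ← Nat.cast_mul,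
      choose_mul_succ_eq]

end Nat

section OrderedField

variable {K : Type*} [Field K] [LinearOrder K] [IsStrictOrderedRing K]

lemma add_mul_div_self_lt_of_lt {d x y B : K} (hd : 0 < d) (hx : 0 < x) (hxy : x < y) :
    (d + y * B) / y < (d + x * B) / x := by
  rw [add_div, add_div, mul_div_cancel_left₀ B (hx.trans hxy).ne',
    mul_div_cancel_left₀ B hx.ne']
  gcongr

lemma weighted_average_div_lt {A B b h h' : ℕ} (hBA : B < A) (hb : 2 ≤ b) (hbh : b ≤ h)
    (hhh' : h < h') :
    (((b - 1) * A + (h' - b) * B : ℕ) : K) / ((h' - 1 : ℕ) : K) <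
      (((b - 1) * A + (h - b) * B : ℕ) : K) / ((h - 1 : ℕ) : K) := by
  have hnum : ∀ x, b ≤ x → (((b - 1) * A + (x - b) * B : ℕ) : K) =
      ((b : K) - 1) * (A - B) + ((x - 1 : ℕ) : K) * B := by
    intro x hx
    push_cast [Nat.cast_sub hx, Nat.cast_sub (by omega : 1 ≤ x),
      Nat.cast_sub (by omega : 1 ≤ b)]
    ring
  rw [hnum h' (by omega), hnum h hbh]
  apply add_mul_div_self_lt_of_lt
  · have hb' : (1 : K) < b := by exact_mod_cast hb
    have hBA' : (B : K) < A := by exact_mod_cast hBA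
    nlinarith
  · exact_mod_cast (by omega : 0 < h - 1)
  · exact_mod_cast (by omega : h - 1 < h' - 1)

lemma mul_choose_two_ratio_lt_weighted_average {A B b c k : K} (hA : 0 < A) (hk : 0 < k)
    (hbc : b < c) (hkc : k + 4 ≤ c) (hB : B * (c - b) = A * (c - b - k)) :
    A * ((c - k) * (c - k - 1) / 2) / (c * (c - 1) / 2) <
      ((b - 1) * A + (c - 1 - b) * B) / (c - 2) := by
  have hcb : 0 < c - b := sub_pos.mpr hbc
  have hc2 : 0 < c - 2 := by linarith
  have hc0 : c ≠ 0 := by linarith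
  have hc1 : c - 1 ≠ 0 := by linarith
  have hc : 0 < c * (c - 1) := by nlinarith
  have hlhs : A * ((c - k) * (c - k - 1) / 2) / (c * (c - 1) / 2) =
      A * (1 - k * (2 * c - k - 1) / (c * (c - 1))) := by
    field_simp
    ring
  have hrhs : ((b - 1) * A + (c - 1 - b) * B) / (c - 2) =
      A * (1 - (c - 1 - b) / (c - b) * k / (c - 2)) := by
    obtain rfl : B = A * (c - b - k) / (c - b) := by field_simp; linarith
    field_simp
    ring
  rw [hlhs, hrhs]
  gcongr A * (1 - ?_)
  calc (c - 1 - b) / (c - b) * k / (c - 2) < 1 * k / (c - 2) := by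
        gcongr
        rw [div_lt_one hcb]
        linarith
    _ ≤ k * (2 * c - k - 1) / (c * (c - 1)) := by
        rw [one_mul, div_le_div_iff₀ hc2 hc, mul_assoc]
        have : c * (c - 1) ≤ (2 * c - k - 1) * (c - 2) := by nlinarith
        gcongr

end OrderedField

theorem stmt19_general (b c k : ℕ) (hb : 2 ≤ b) (hbc : b < c)
    (hk : 1 ≤ k) (hc : b + k + 2 ≤ c) :
    (∀ h h' : ℕ, b < h → h < h' → h' ≤ c - 1 →
        ((((b - 1) * (c - b).choose k + (h' - b) * (c - b - 1).choose k : ℕ)) : ℚ) /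
            (((h' - 1) : ℕ) : ℚ) <
          ((((b - 1) * (c - b).choose k + (h - b) * (c - b - 1).choose k : ℕ)) : ℚ) /
            (((h - 1) : ℕ) : ℚ)) ∧
      (((c - b).choose k * (c - k).choose 2 : ℕ) : ℚ) / ((c.choose 2 : ℕ) : ℚ) <
        ((((b - 1) * (c - b).choose k + (c - 1 - b) * (c - b - 1).choose k : ℕ)) : ℚ) /
          (((c - 2) : ℕ) : ℚ) := by
  have hBA := Nat.choose_sub_one_lt_choose (n := c - b) hk (by omega)
  refine ⟨fun h h' hbh hhh' _ => weighted_average_div_lt hBA hb hbh.le hhh', ?_⟩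
  have hrel := Nat.cast_choose_sub_one_mul ℚ (n := c - b) (k := k) (by omega)
  rw [Nat.cast_sub hbc.le] at hrel
  push_cast [Nat.cast_choose_two, Nat.cast_sub (by omega : k ≤ c), Nat.cast_sub (by omega : 2 ≤ c),
    Nat.cast_sub (by omega : 1 ≤ b), Nat.cast_sub (by omega : b ≤ c - 1),
    Nat.cast_sub (by omega : 1 ≤ c)]
  exact mul_choose_two_ratio_lt_weighted_average (Nat.cast_pos.mpr (Nat.choose_pos (by omega)))
    (by exact_mod_cast hk) (by exact_mod_cast hbc) (by exact_mod_cast (by omega : k + 4 ≤ c)) hrel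

theorem stmt19 (b c k : ℕ) (hb : 2 ≤ b) (hbc : b < c)
    (hk : 1 ≤ k) (hkc : k ≤ c - b - 1) (hc : b + k + 2 ≤ c) :
    (∀ h h' : ℕ, b < h → h < h' → h' ≤ c - 1 →
        ((((b - 1) * (c - b).choose k + (h' - b) * (c - b - 1).choose k : ℕ)) : ℚ) /
            (((h' - 1) : ℕ) : ℚ) <
          ((((b - 1) * (c - b).choose k + (h - b) * (c - b - 1).choose k : ℕ)) : ℚ) /
            (((h - 1) : ℕ) : ℚ)) ∧
      (((c - b).choose k * (c - k).choose 2 : ℕ) : ℚ) / ((c.choose 2 : ℕ) : ℚ) <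
        ((((b - 1) * (c - b).choose k + (c - 1 - b) * (c - b - 1).choose k : ℕ)) : ℚ) /
          (((c - 2) : ℕ) : ℚ) :=
  stmt19_general b c k hb hbc hk hc
end
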